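/- arXiv:2505.04248 — 2 statements merged into one kernel-verified Lean document; each statement's English description precedes it below -/
import Mathlib

section
/- Let G be a finite simple graph with clique partition π = {W₁,…,W_r}. For every nonnegative integer k, the number of independent sets of size k in the clique-whiskered graph G^π equals Σ_{ℓ=0}^{k} fℓ · C(r − ℓ, k − ℓ), where fℓ is the number of independent sets of size ℓ in G. -/
def cliqueWhisker {V ι : Type*} (G : SimpleGraph V) (p : V → ι) :
    SimpleGraph (V ⊕ ι) :=
  SimpleGraph.fromRel (fun a b =>
    match a, b with
    | Sum.inl u, Sum.inl v => G.Adj u v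
    | Sum.inl u, Sum.inr i => p u = i
    | _, _ => False)

def whiskerGraph {V : Type*} (G : SimpleGraph V) : SimpleGraph (V ⊕ V) :=
  SimpleGraph.fromRel (fun a b =>
    match a, b with
    | Sum.inl u, Sum.inl v => G.Adj u v
    | Sum.inl u, Sum.inr w => u = w
    | _, _ => False)

def IsVertexCover {V : Type*} (G : SimpleGraph V) (C : Set V) : Prop :=
  ∀ ⦃u v : V⦄, G.Adj u v → u ∈ C ∨ v ∈ C

def IsMinVertexCover {V : Type*} (G : SimpleGraph V) (C : Set V) : Prop :=
  IsVertexCover G C ∧ ∀ D ⊆ C, IsVertexCover G D → D = C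

def IsIndep {V : Type*} (G : SimpleGraph V) (A : Set V) : Prop :=
  ∀ u ∈ A, ∀ v ∈ A, ¬ G.Adj u v

/-!
An independent set of `G^π` is `S ⊔ T` with `S` independent in `G` and `T` a set of whiskers
avoiding the cliques that `S` meets. An independent set meets each clique at most once, so `S`
meets exactly `#S` cliques, and for `#S = ℓ` there are `C(r - ℓ, k - ℓ)` choices of `T`.
-/

open Finset

section CliqueWhisker

variable {V ι : Type*} (G : SimpleGraph V) (p : V → ι)

@[simp]
lemma cliqueWhisker_adj_inl_inl (u v : V) :
    (cliqueWhisker G p).Adj (.inl u) (.inl v) ↔ G.Adj u v := by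
  simp only [cliqueWhisker, SimpleGraph.fromRel_adj, ne_eq, Sum.inl.injEq]
  exact ⟨fun ⟨_, h⟩ => h.elim id G.adj_symm, fun h => ⟨h.ne, .inl h⟩⟩

@[simp]
lemma cliqueWhisker_adj_inl_inr (u : V) (i : ι) :
    (cliqueWhisker G p).Adj (.inl u) (.inr i) ↔ p u = i := by
  simp [cliqueWhisker]

@[simp]
lemma cliqueWhisker_adj_inr_inl (i : ι) (u : V) :
    (cliqueWhisker G p).Adj (.inr i) (.inl u) ↔ p u = i := by
  simp [cliqueWhisker]

@[simp]
lemma cliqueWhisker_not_adj_inr_inr (i j : ι) :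
    ¬ (cliqueWhisker G p).Adj (.inr i) (.inr j) := by
  simp [cliqueWhisker]

lemma isIndep_cliqueWhisker_disjSum_iff [DecidableEq ι] (S : Finset V) (T : Finset ι) :
    IsIndep (cliqueWhisker G p) (S.disjSum T : Set (V ⊕ ι)) ↔
      IsIndep G S ∧ Disjoint (S.image p) T := by
  simp only [IsIndep, Sum.forall, mem_coe, inl_mem_disjSum, inr_mem_disjSum, disjoint_left,
    mem_image, cliqueWhisker_adj_inl_inl, cliqueWhisker_adj_inl_inr, cliqueWhisker_adj_inr_inl,
    cliqueWhisker_not_adj_inr_inr]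
  aesop

end CliqueWhisker

lemma card_filter_disjoint_card_eq {α : Type*} [Fintype α] [DecidableEq α] (A : Finset α)
    (m : ℕ) : #{T : Finset α | Disjoint A T ∧ #T = m} = (Fintype.card α - #A).choose m := by
  rw [← card_compl, ← card_powersetCard]
  congr 1
  ext T
  simp [mem_powersetCard, subset_compl_iff_disjoint_left]

lemma sum_filter_card_le_eq_sum_range {α M : Type*} [AddCommMonoid M] (s : Finset (Finset α))
    (k : ℕ) (f : ℕ → M) :
    ∑ S ∈ s with #S ≤ k, f #S = ∑ ℓ ∈ range (k + 1), #{S ∈ s | #S = ℓ} • f ℓ := by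
  rw [← sum_fiberwise_of_maps_to (g := card) (t := range (k + 1))]
  · refine sum_congr rfl fun ℓ hℓ => ?_
    rw [filter_filter, sum_congr rfl fun S hS => by rw [(mem_filter.1 hS).2.2], sum_const]
    congr 2
    ext S
    simp only [mem_filter, and_congr_right_iff, mem_range] at hℓ ⊢
    omega
  · intro S hS
    simp only [mem_filter, mem_range] at hS ⊢
    omega

section Counting

variable {V ι : Type*} [Fintype V] [Fintype ι] [DecidableEq ι] (G : SimpleGraph V) (p : V → ι)

open scoped Classical in
lemma card_isIndep_cliqueWhisker (k : ℕ) :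
    #{A : Finset (V ⊕ ι) | IsIndep (cliqueWhisker G p) A ∧ #A = k} =
      ∑ S ∈ ({S : Finset V | IsIndep G S ∧ #S ≤ k} : Finset _),
        (Fintype.card ι - #(S.image p)).choose (k - #S) := by
  simp_rw [← card_filter_disjoint_card_eq, ← card_sigma]
  refine card_nbij' (fun A => ⟨A.toLeft, A.toRight⟩) (fun x => x.1.disjSum x.2) ?_ ?_ ?_ ?_
  · intro A hA
    rw [← toLeft_disjSum_toRight (u := A)] at hA
    simp only [coe_filter, mem_univ, true_and, Set.mem_ofPred_eq, coe_sigma, Set.mem_sigma_iff,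
      isIndep_cliqueWhisker_disjSum_iff, card_disjSum] at hA ⊢
    exact ⟨⟨hA.1.1, by omega⟩, hA.1.2, by omega⟩
  · rintro ⟨S, T⟩ h
    simp only [coe_filter, mem_univ, true_and, Set.mem_ofPred_eq, coe_sigma, Set.mem_sigma_iff,
      isIndep_cliqueWhisker_disjSum_iff, card_disjSum] at h ⊢
    exact ⟨⟨h.1.1, h.2.1⟩, by omega⟩
  · intro A _
    exact toLeft_disjSum_toRight
  · rintro ⟨S, T⟩ _
    simp

end Counting

lemma card_image_of_isIndep {V ι : Type*} [DecidableEq ι] {G : SimpleGraph V} {p : V → ι}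
    (hclique : ∀ u v : V, p u = p v → u ≠ v → G.Adj u v) {S : Finset V}
    (hS : IsIndep G (S : Set V)) : #(S.image p) = #S :=
  card_image_of_injOn fun u hu v hv huv => by_contra fun hne => hS u hu v hv (hclique u v huv hne)

theorem stmt2_general {V : Type*} [Fintype V] {r : ℕ} (G : SimpleGraph V) (p : V → Fin r)
    (hclique : ∀ u v : V, p u = p v → u ≠ v → G.Adj u v)
    (k : ℕ) :
    Nat.card {A : Finset (V ⊕ Fin r) //
        IsIndep (cliqueWhisker G p) (↑A : Set (V ⊕ Fin r)) ∧ A.card = k} =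
      ∑ ℓ ∈ Finset.range (k + 1),
        Nat.card {A : Finset V // IsIndep G (↑A : Set V) ∧ A.card = ℓ} *
          Nat.choose (r - ℓ) (k - ℓ) := by
  classical
  simp only [Nat.card_eq_fintype_card, Fintype.card_subtype, ← smul_eq_mul]
  rw [card_isIndep_cliqueWhisker, ← filter_filter, Fintype.card_fin,
    sum_congr rfl fun S hS => by rw [card_image_of_isIndep hclique (by simp_all)],
    sum_filter_card_le_eq_sum_range _ _ fun ℓ => (r - ℓ).choose (k - ℓ)]
  simp only [filter_filter]

theorem stmt2 {V : Type*} [Fintype V] {r : ℕ} (G : SimpleGraph V) (p : V → Fin r)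
    (hclique : ∀ u v : V, p u = p v → u ≠ v → G.Adj u v)
    (hsurj : Function.Surjective p) (k : ℕ) :
    Nat.card {A : Finset (V ⊕ Fin r) //
        IsIndep (cliqueWhisker G p) (↑A : Set (V ⊕ Fin r)) ∧ A.card = k} =
      ∑ ℓ ∈ Finset.range (k + 1),
        Nat.card {A : Finset V // IsIndep G (↑A : Set V) ∧ A.card = ℓ} *
          Nat.choose (r - ℓ) (k - ℓ) :=
  stmt2_general G p hclique k
end

section
/- Let G be a finite simple graph with clique partition π = {W₁,…,W_r}. Then every maximal independent set of the clique-whiskered graph G^π has exactly r vertices; in particular G^π is well-covered. -/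
/-!
Send each vertex `x ∈ Wᵢ` and the whisker `wᵢ` to the block index `i`. Two distinct vertices
with the same index are adjacent in `G^π`, so an independent set meets each block at most once.
A maximal independent set meets each block: otherwise `wᵢ`, whose neighbours all lie in block
`i`, could be added. Hence the index map is a bijection from a maximal independent set onto the
index set.
-/

namespace cliqueWhisker

variable {V ι : Type*} {G : SimpleGraph V} {p : V → ι}

@[simp]
theorem adj_inl_inl {u v : V} : (cliqueWhisker G p).Adj (.inl u) (.inl v) ↔ G.Adj u v := by
  simp only [cliqueWhisker, SimpleGraph.fromRel_adj, ne_eq, Sum.inl.injEq]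
  exact ⟨fun ⟨_, h⟩ => h.elim id .symm, fun h => ⟨h.ne, .inl h⟩⟩

@[simp]
theorem adj_inl_inr {u : V} {i : ι} : (cliqueWhisker G p).Adj (.inl u) (.inr i) ↔ p u = i := by
  simp [cliqueWhisker]

@[simp]
theorem adj_inr_inl {u : V} {i : ι} : (cliqueWhisker G p).Adj (.inr i) (.inl u) ↔ p u = i := by
  simp [cliqueWhisker]

@[simp]
theorem not_adj_inr_inr {i j : ι} : ¬ (cliqueWhisker G p).Adj (.inr i) (.inr j) := by
  simp [cliqueWhisker]

theorem sumElim_eq_of_adj_inr {a : V ⊕ ι} {i : ι} (h : (cliqueWhisker G p).Adj (.inr i) a) :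
    Sum.elim p id a = i := by
  cases a <;> simp_all

theorem adj_of_sumElim_eq (hclique : ∀ u v : V, p u = p v → u ≠ v → G.Adj u v)
    {a b : V ⊕ ι} (hab : a ≠ b) (h : Sum.elim p id a = Sum.elim p id b) :
    (cliqueWhisker G p).Adj a b := by
  rcases a with u | i <;> rcases b with v | j
  · exact adj_inl_inl.2 (hclique u v h (by simpa using hab))
  · exact adj_inl_inr.2 h
  · exact adj_inr_inl.2 h.symm
  · exact absurd (congrArg Sum.inr h) hab

theorem injOn_sumElim_of_isIndep (hclique : ∀ u v : V, p u = p v → u ≠ v → G.Adj u v)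
    {A : Set (V ⊕ ι)} (hA : IsIndep (cliqueWhisker G p) A) : Set.InjOn (Sum.elim p id) A :=
  fun a ha b hb h => by_contra fun hab => hA a ha b hb (adj_of_sumElim_eq hclique hab h)

theorem isIndep_insert_inr {A : Set (V ⊕ ι)} (hA : IsIndep (cliqueWhisker G p) A) {i : ι}
    (hi : ∀ a ∈ A, Sum.elim p id a ≠ i) : IsIndep (cliqueWhisker G p) (insert (.inr i) A) := by
  have hfar : ∀ a ∈ A, ¬ (cliqueWhisker G p).Adj (.inr i) a :=
    fun a ha h => hi a ha (sumElim_eq_of_adj_inr h)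
  rintro a (rfl | ha) b (rfl | hb)
  · exact not_adj_inr_inr
  · exact hfar b hb
  · exact fun h => hfar a ha h.symm
  · exact hA a ha b hb

theorem surjOn_sumElim_of_maximal {A : Set (V ⊕ ι)} (hA : IsIndep (cliqueWhisker G p) A)
    (hmax : ∀ B, IsIndep (cliqueWhisker G p) B → A ⊆ B → A = B) :
    Set.SurjOn (Sum.elim p id) A Set.univ := by
  intro i _
  by_contra hi
  have hiA : ∀ a ∈ A, Sum.elim p id a ≠ i := fun a ha h => hi ⟨a, ha, h⟩
  have hins := hmax _ (isIndep_insert_inr hA hiA) (Set.subset_insert _ _)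
  exact hiA (.inr i) (hins ▸ Set.mem_insert _ _) rfl

theorem ncard_of_maximal (hclique : ∀ u v : V, p u = p v → u ≠ v → G.Adj u v)
    {A : Set (V ⊕ ι)} (hA : IsIndep (cliqueWhisker G p) A)
    (hmax : ∀ B, IsIndep (cliqueWhisker G p) B → A ⊆ B → A = B) :
    A.ncard = Nat.card ι := by
  rw [← Set.ncard_univ, ← (surjOn_sumElim_of_maximal hA hmax).image_eq_of_mapsTo
    (Set.mapsTo_univ _ _), (injOn_sumElim_of_isIndep hclique hA).ncard_image]

end cliqueWhisker

theorem stmt4_general {V : Type*} {r : ℕ} (G : SimpleGraph V) (p : V → Fin r)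
    (hclique : ∀ u v : V, p u = p v → u ≠ v → G.Adj u v)
    (A : Set (V ⊕ Fin r)) (hA : IsIndep (cliqueWhisker G p) A)
    (hmax : ∀ B, IsIndep (cliqueWhisker G p) B → A ⊆ B → A = B) :
    A.ncard = r := by
  simpa using cliqueWhisker.ncard_of_maximal hclique hA hmax

theorem stmt4 {V : Type*} [Fintype V] {r : ℕ} (G : SimpleGraph V) (p : V → Fin r)
    (hclique : ∀ u v : V, p u = p v → u ≠ v → G.Adj u v)
    (hsurj : Function.Surjective p)
    (A : Set (V ⊕ Fin r)) (hA : IsIndep (cliqueWhisker G p) A)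
    (hmax : ∀ B, IsIndep (cliqueWhisker G p) B → A ⊆ B → A = B) :
    A.ncard = r :=
  stmt4_general G p hclique A hA hmax
end
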